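/- Let D ⊆ ℂ be a circular domain, let q be a monic complex polynomial of degree d ≥ 1, and let f, g be monic complex polynomials of degree n ≥ 1 without common zeros in q(D). If |f(z)| ≥ |g(z)| for every z ∈ q(D), then |S_{q,n}(f)(y₁,…,yₙ)| ≥ |S_{q,n}(g)(y₁,…,yₙ)| for all (y₁,…,yₙ) ∈ (q_∘(D))ⁿ. -/

import Mathlib

open Polynomial

/-- The apolarity form `[f,g]_m`. -/
noncomputable def apol (m : ℕ) (f g : Polynomial ℂ) : ℂ :=
  ∑ k ∈ Finset.range (m + 1),
    (-1 : ℂ) ^ k * ((m.choose k : ℂ))⁻¹ * f.coeff k * g.coeff (m - k)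

/-- The symmetrization `Sym_N(f)` of a polynomial, as a function on `ι → ℂ`
with `N = card ι`. -/
noncomputable def symFun {ι : Type*} [Fintype ι] (f : Polynomial ℂ) (y : ι → ℂ) : ℂ :=
  ∑ k ∈ Finset.range (Fintype.card ι + 1),
    (((Fintype.card ι).choose k : ℂ))⁻¹ * f.coeff k *
      MvPolynomial.eval y (MvPolynomial.esymm ι ℂ k)

/-- A circular domain: an open or closed disk or half-plane, or a complement thereof. -/
def IsCircularDomain (D : Set ℂ) : Prop :=
  ∃ (α γ : ℝ) (β : ℂ),
    D = {z : ℂ | α * Complex.normSq z + ((starRingEnd ℂ) β * z).re + γ < 0} ∨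
    D = {z : ℂ | α * Complex.normSq z + ((starRingEnd ℂ) β * z).re + γ ≤ 0}

/-- `q_∘(D) = {u : q⁻¹(u) ⊆ D}`. -/
def innerImage (q : Polynomial ℂ) (D : Set ℂ) : Set ℂ :=
  {u : ℂ | ∀ z : ℂ, q.eval z = u → z ∈ D}

/-- `S_{q,n}(f)(u₁,…,uₙ) = [f∘q, ∏ⱼ (q - uⱼ)]_{nd}`. -/
noncomputable def Sfun (q : Polynomial ℂ) (n : ℕ) (f : Polynomial ℂ) (u : Fin n → ℂ) : ℂ :=
  apol (n * q.natDegree) (f.comp q) (∏ j, (q - Polynomial.C (u j)))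

/-- The Fischer inner product `⟨f,g⟩_n`. -/
noncomputable def fischer (n : ℕ) (f g : Polynomial ℂ) : ℂ :=
  ∑ k ∈ Finset.range (n + 1),
    ((n.choose k : ℂ))⁻¹ * f.coeff k * (starRingEnd ℂ) (g.coeff k)

/-
For `‖c‖ < 1` the polynomial `h = f - c g` has degree `n` and, by the majorization, no zeros on
`q(D)`; so `h ∘ q` has no zeros in `D`, while `P = ∏ⱼ (q - yⱼ)` has all its `nd` zeros in `D`.
Grace's theorem for the circular domain `D` gives `[h ∘ q, P]_{nd} ≠ 0`, that is
`S(f)(y) - c S(g)(y) ≠ 0` for every `‖c‖ < 1`, which forces `‖S(g)(y)‖ ≤ ‖S(f)(y)‖`.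

Grace's theorem follows by peeling off the zeros `a` of `P` one at a time:
`[(X - a) F, G]_{s+1}` is a multiple of `[F, A_a G]_s`, where `A_a G = (s+1) G + (a - X) G'` is the
polar derivative, and Laguerre's theorem keeps `A_a G` free of zeros in `D` when `a ∈ D`. For the
latter, a zero `z₀ ∈ D` of `A_a G` gives `∑_b 1/(z₀ - b) = (s+1)/(z₀ - a)` over the zeros `b` of
`G`. The inversion `z ↦ 1/(z₀ - z)` maps `D` onto a circular domain whose complement is convex
(as `z₀ ∈ D`) and contains every `1/(z₀ - b)`, so it contains their mean padded by zeros, which is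
`1/(z₀ - a)`; but `a ∈ D`.
-/

open Finset ComplexConjugate

lemma Convex.inv_card_smul_sum_mem {E : Type*} [AddCommGroup E] [Module ℝ E] {W : Set E}
    (hW : Convex ℝ W) {m : Multiset E} (hm : ∀ x ∈ m, x ∈ W) (h0 : m ≠ 0) :
    (Multiset.card m : ℝ)⁻¹ • m.sum ∈ W := by
  classical
  have hcard : (Multiset.card m : ℝ) ≠ 0 := by simpa using h0
  rw [Finset.sum_multiset_count, Finset.smul_sum]
  simp_rw [← Nat.cast_smul_eq_nsmul ℝ, smul_smul]
  refine hW.sum_mem (fun _ _ => by positivity) ?_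
    fun x hx => hm x (Multiset.mem_toFinset.mp hx)
  rw [← Finset.mul_sum, ← Nat.cast_sum, Multiset.toFinset_sum_count_eq, inv_mul_cancel₀ hcard]

lemma sub_mul_ne_zero_of_norm_le {𝕜 : Type*} [NormedDivisionRing 𝕜] {a b c : 𝕜}
    (hba : ‖b‖ ≤ ‖a‖) (hab : ¬(a = 0 ∧ b = 0)) (hc : ‖c‖ < 1) : a - c * b ≠ 0 := by
  intro h
  rw [sub_eq_zero] at h
  by_cases hb : b = 0
  · exact hab ⟨by simp [h, hb], hb⟩
  · have : ‖a‖ < ‖b‖ := by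
      rw [h, norm_mul]
      exact mul_lt_of_lt_one_left (norm_pos_iff.mpr hb) hc
    linarith

lemma norm_le_of_forall_sub_mul_ne_zero {𝕜 : Type*} [NormedDivisionRing 𝕜] {a b : 𝕜}
    (h : ∀ c : 𝕜, ‖c‖ < 1 → a - c * b ≠ 0) : ‖b‖ ≤ ‖a‖ := by
  by_contra! hlt
  have hb : b ≠ 0 := norm_pos_iff.mp ((norm_nonneg a).trans_lt hlt)
  refine h (a * b⁻¹) ?_ (by rw [inv_mul_cancel_right₀ hb, sub_self])
  rwa [norm_mul, norm_inv, mul_inv_lt_iff₀ (norm_pos_iff.mpr hb), one_mul]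

lemma apol_comm (m : ℕ) (f g : ℂ[X]) : apol m f g = (-1) ^ m * apol m g f := by
  rw [apol, apol, mul_sum, ← sum_range_reflect]
  refine sum_congr rfl fun k hk => ?_
  obtain ⟨j, rfl⟩ := Nat.exists_eq_add_of_le (Nat.lt_succ_iff.mp (mem_range.mp hk))
  have hsign : (-1 : ℂ) ^ j = (-1) ^ (k + j) * (-1) ^ k := by
    rw [pow_add, mul_right_comm, ← pow_add, ← two_mul, pow_mul]
    simp
  rw [Nat.add_sub_cancel, Nat.add_sub_cancel_left, Nat.add_sub_cancel_right, Nat.choose_symm_add,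
    hsign]
  ring

lemma apol_sub_left (m : ℕ) (f g h : ℂ[X]) : apol m (f - g) h = apol m f h - apol m g h := by
  simp only [apol, coeff_sub, ← sum_sub_distrib]
  exact sum_congr rfl fun _ _ => by ring

lemma apol_C_mul_left (m : ℕ) (c : ℂ) (f g : ℂ[X]) : apol m (C c * f) g = c * apol m f g := by
  simp only [apol, coeff_C_mul, mul_sum]
  exact sum_congr rfl fun _ _ => by ring

noncomputable def polarDeriv (s : ℕ) (a : ℂ) (G : ℂ[X]) : ℂ[X] :=
  C (s : ℂ) * G + (C a - X) * derivative G

lemma coeff_polarDeriv (s : ℕ) (a : ℂ) (G : ℂ[X]) (k : ℕ) :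
    (polarDeriv s a G).coeff k = ((s : ℂ) - k) * G.coeff k + a * (k + 1) * G.coeff (k + 1) := by
  rw [polarDeriv, sub_mul, coeff_add, coeff_sub, coeff_C_mul, coeff_C_mul, coeff_derivative]
  cases k with
  | zero => simp
  | succ k => rw [coeff_X_mul, coeff_derivative]; push_cast; ring

lemma eval_polarDeriv (s : ℕ) (a : ℂ) (G : ℂ[X]) (z : ℂ) :
    (polarDeriv s a G).eval z = s * G.eval z + (a - z) * (derivative G).eval z := by
  simp [polarDeriv]

lemma inv_choose_succ_succ {s j : ℕ} (hj : j ≤ s) :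
    (((s + 1).choose (j + 1) : ℕ) : ℂ)⁻¹ = (j + 1) / ((s + 1) * s.choose j) := by
  have h₁ : (((s + 1).choose (j + 1) : ℕ) : ℂ) ≠ 0 := by
    exact_mod_cast (Nat.choose_pos (Nat.succ_le_succ hj)).ne'
  have h₂ : ((s.choose j : ℕ) : ℂ) ≠ 0 := by exact_mod_cast (Nat.choose_pos hj).ne'
  field_simp
  exact_mod_cast Nat.add_one_mul_choose_eq s j

lemma inv_choose_succ {s j : ℕ} (hj : j ≤ s) :
    (((s + 1).choose j : ℕ) : ℂ)⁻¹ = ((s : ℂ) + 1 - j) / ((s + 1) * s.choose j) := by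
  have h₁ : (((s + 1).choose j : ℕ) : ℂ) ≠ 0 := by
    exact_mod_cast (Nat.choose_pos (hj.trans s.le_succ)).ne'
  have h₂ : ((s.choose j : ℕ) : ℂ) ≠ 0 := by exact_mod_cast (Nat.choose_pos hj).ne'
  field_simp
  have h : (s.choose j : ℂ) * (s + 1) = (s + 1).choose j * ((s + 1 - j : ℕ) : ℂ) := by
    exact_mod_cast Nat.choose_mul_succ_eq s j
  push_cast [Nat.cast_sub (hj.trans s.le_succ)] at h
  linear_combination h

lemma apol_X_sub_C_mul {s : ℕ} {f : ℂ[X]} (hf : f.natDegree ≤ s) (a : ℂ) (g : ℂ[X]) :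
    apol (s + 1) ((X - C a) * f) g = -((s : ℂ) + 1)⁻¹ * apol s f (polarDeriv (s + 1) a g) := by
  have hX : apol (s + 1) (X * f) g = ∑ j ∈ range (s + 1),
      (-1) ^ (j + 1) * (((s + 1).choose (j + 1) : ℕ) : ℂ)⁻¹ * f.coeff j * g.coeff (s - j) := by
    simp [apol, sum_range_succ' _ (s + 1), coeff_X_mul]
  have hC : apol (s + 1) f g = ∑ j ∈ range (s + 1),
      (-1) ^ j * (((s + 1).choose j : ℕ) : ℂ)⁻¹ * f.coeff j * g.coeff (s + 1 - j) := by
    rw [apol, sum_range_succ, coeff_eq_zero_of_natDegree_lt (Nat.lt_succ_of_le hf)]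
    simp
  rw [sub_mul, apol_sub_left, apol_C_mul_left, hX, hC, apol, mul_sum, mul_sum, ← sum_sub_distrib]
  refine sum_congr rfl fun j hj => ?_
  have hj : j ≤ s := Nat.lt_succ_iff.mp (mem_range.mp hj)
  rw [coeff_polarDeriv, inv_choose_succ_succ hj, inv_choose_succ hj, ← Nat.sub_add_comm hj]
  push_cast [Nat.cast_sub hj]
  field_simp
  ring

def circForm (α γ : ℝ) (β : ℂ) (z : ℂ) : ℝ := α * Complex.normSq z + (conj β * z).re + γ

def circDomain (S : Set ℝ) (α γ : ℝ) (β : ℂ) : Set ℂ := {z | circForm α γ β z ∈ S}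

def IsNegHalfLine (S : Set ℝ) : Prop := S = Set.Iio 0 ∨ S = Set.Iic 0

lemma circForm_sub_inv_mul_normSq (α γ : ℝ) (β z₀ : ℂ) {w : ℂ} (hw : w ≠ 0) :
    circForm α γ β (z₀ - w⁻¹) * Complex.normSq w
      = circForm (circForm α γ β z₀) α (-(2 * α * conj z₀ + conj β)) w := by
  have hw' : w.re ^ 2 + w.im ^ 2 ≠ 0 := by
    simpa [Complex.normSq_apply, sq] using (Complex.normSq_pos.mpr hw).ne'
  simp only [circForm, Complex.normSq_apply, Complex.sub_re, Complex.sub_im, Complex.inv_re,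
    Complex.inv_im, Complex.mul_re, Complex.mul_im, Complex.add_re, Complex.add_im,
    Complex.neg_re, Complex.neg_im, Complex.ofReal_re, Complex.ofReal_im, Complex.conj_re,
    Complex.conj_im, Complex.re_ofNat, Complex.im_ofNat]
  field_simp
  ring

section CircularDomain

variable {S : Set ℝ} {α γ : ℝ} {β : ℂ}

lemma IsNegHalfLine.nonpos (hS : IsNegHalfLine S) {x : ℝ} (hx : x ∈ S) : x ≤ 0 := by
  rcases hS with rfl | rfl
  exacts [le_of_lt hx, hx]

lemma IsNegHalfLine.mul_mem_iff (hS : IsNegHalfLine S) {x t : ℝ} (ht : 0 < t) :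
    x * t ∈ S ↔ x ∈ S := by
  rcases hS with rfl | rfl
  · simp [mul_neg_iff, ht, ht.not_gt]
  · simp [mul_nonpos_iff, ht.le, ht.not_ge]

lemma convex_compl_circDomain (hS : IsNegHalfLine S) (hα : α ≤ 0) (β : ℂ) :
    Convex ℝ (circDomain S α γ β)ᶜ := by
  have hconc : ConcaveOn ℝ Set.univ (circForm α γ β) := by
    refine ⟨convex_univ, fun x _ y _ a b ha hb hab => ?_⟩
    have key : a • circForm α γ β x + b • circForm α γ β y
        = circForm α γ β (a • x + b • y) + α * (a * b) * Complex.normSq (x - y) := by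
      obtain rfl : b = 1 - a := by linarith
      simp only [circForm, smul_eq_mul, Complex.normSq_apply, Complex.add_re, Complex.add_im,
        Complex.sub_re, Complex.sub_im, Complex.mul_re, Complex.mul_im, Complex.real_smul,
        Complex.ofReal_re, Complex.ofReal_im]
      ring
    have := mul_nonpos_of_nonpos_of_nonneg hα
      (mul_nonneg (mul_nonneg ha hb) (Complex.normSq_nonneg (x - y)))
    linarith
  rcases hS with rfl | rfl
  · simpa [circDomain, Set.compl_ofPred] using hconc.convex_ge 0
  · simpa [circDomain, Set.compl_ofPred] using hconc.convex_gt 0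

lemma inv_sub_mem_circDomain_iff (hS : IsNegHalfLine S) {z₀ b : ℂ} (hb : z₀ ≠ b) :
    (z₀ - b)⁻¹ ∈ circDomain S (circForm α γ β z₀) α (-(2 * α * conj z₀ + conj β))
      ↔ b ∈ circDomain S α γ β := by
  have hw : (z₀ - b)⁻¹ ≠ 0 := inv_ne_zero (sub_ne_zero.mpr hb)
  simp only [circDomain, Set.mem_ofPred_eq, ← circForm_sub_inv_mul_normSq α γ β z₀ hw,
    inv_inv, sub_sub_cancel, hS.mul_mem_iff (Complex.normSq_pos.mpr hw)]

lemma sum_inv_sub_roots_of_eval_polarDeriv_eq_zero {s : ℕ} {a z₀ : ℂ} {G : ℂ[X]}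
    (hG : G.eval z₀ ≠ 0) (hpol : (polarDeriv (s + 1) a G).eval z₀ = 0) :
    z₀ ≠ a ∧ (G.roots.map fun b => (z₀ - b)⁻¹).sum = (s + 1) * (z₀ - a)⁻¹ := by
  rw [eval_polarDeriv, (IsAlgClosed.splits G).eval_derivative_eq_eval_mul_sum hG] at hpol
  push_cast at hpol
  simp only [one_div] at hpol
  have hza : z₀ ≠ a := by
    rintro rfl
    apply hG
    simpa [Nat.cast_add_one_ne_zero] using hpol
  refine ⟨hza, ?_⟩
  have h : G.eval z₀ * ((s + 1) + (a - z₀) * (G.roots.map fun b => (z₀ - b)⁻¹).sum) = 0 := by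
    linear_combination hpol
  rw [eq_mul_inv_iff_mul_eq₀ (sub_ne_zero.mpr hza)]
  linear_combination -(mul_eq_zero.mp h).resolve_left hG

-- `α ∈ S` says that the domain contains `∞`, where `G`, taken as a polynomial of degree
-- `s + 1`, vanishes unless its degree is exact.
theorem eval_polarDeriv_ne_zero (hS : IsNegHalfLine S) {s : ℕ} {a : ℂ}
    (ha : a ∈ circDomain S α γ β) {G : ℂ[X]} (hdeg : G.natDegree ≤ s + 1)
    (hGz : ∀ z ∈ circDomain S α γ β, G.eval z ≠ 0) (hinf : α ∉ S ∨ G.natDegree = s + 1)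
    {z₀ : ℂ} (hz₀ : z₀ ∈ circDomain S α γ β) : (polarDeriv (s + 1) a G).eval z₀ ≠ 0 := by
  intro hpol
  obtain ⟨hza, hsum⟩ := sum_inv_sub_roots_of_eval_polarDeriv_eq_zero (hGz z₀ hz₀) hpol
  set W := (circDomain S (circForm α γ β z₀) α (-(2 * α * conj z₀ + conj β)))ᶜ
  have hW : Convex ℝ W := convex_compl_circDomain hS (hS.nonpos hz₀) _
  set M := G.roots.map (fun b => (z₀ - b)⁻¹) + Multiset.replicate (s + 1 - G.natDegree) 0
  have hMW : ∀ w ∈ M, w ∈ W := by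
    intro w hw
    rcases Multiset.mem_add.mp hw with hw | hw
    · obtain ⟨b, hb, rfl⟩ := Multiset.mem_map.mp hw
      have hbC : b ∉ circDomain S α γ β := fun hbC => hGz b hbC (isRoot_of_mem_roots hb)
      have hzb : z₀ ≠ b := by rintro rfl; exact hbC hz₀
      exact fun h => hbC ((inv_sub_mem_circDomain_iff hS hzb).mp h)
    · obtain rfl := Multiset.eq_of_mem_replicate hw
      rcases hinf with hα | hfull
      · simpa [W, circDomain, circForm] using hα
      · simp [hfull] at hw
  have hMcard : Multiset.card M = s + 1 := by
    simp only [M, Multiset.card_add, Multiset.card_map, Multiset.card_replicate,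
      IsAlgClosed.card_roots_eq_natDegree]
    omega
  have hmean := hW.inv_card_smul_sum_mem hMW (by rintro h; simp [h] at hMcard)
  rw [hMcard, Multiset.sum_add, hsum, Multiset.sum_replicate, smul_zero, add_zero,
    Complex.real_smul] at hmean
  push_cast at hmean
  rw [inv_mul_cancel_left₀ (by norm_cast)] at hmean
  exact hmean ((inv_sub_mem_circDomain_iff hS hza).mpr ha)

lemma natDegree_polarDeriv_le {s : ℕ} (a : ℂ) {G : ℂ[X]} (hG : G.natDegree ≤ s + 1) :
    (polarDeriv (s + 1) a G).natDegree ≤ s := by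
  refine natDegree_le_iff_coeff_eq_zero.mpr fun k hk => ?_
  rw [coeff_polarDeriv, coeff_eq_zero_of_natDegree_lt (hG.trans_lt (by omega : s + 1 < k + 1))]
  rcases (Nat.succ_le_of_lt hk).eq_or_lt with rfl | hlt
  · simp
  · simp [coeff_eq_zero_of_natDegree_lt (hG.trans_lt hlt)]

lemma natDegree_polarDeriv_eq (hS : IsNegHalfLine S) (hα : α ∈ S) {s : ℕ} {a : ℂ}
    (ha : a ∈ circDomain S α γ β) {G : ℂ[X]} (hdeg : G.natDegree = s + 1)
    (hGz : ∀ z ∈ circDomain S α γ β, G.eval z ≠ 0) :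
    (polarDeriv (s + 1) a G).natDegree = s := by
  have hG0 : G ≠ 0 := by rintro rfl; simp at hdeg
  have hcard : Multiset.card G.roots = s + 1 := by
    rw [IsAlgClosed.card_roots_eq_natDegree, hdeg]
  have hmean : ((s + 1 : ℕ) : ℝ)⁻¹ • G.roots.sum ∉ circDomain S α γ β := by
    have := (convex_compl_circDomain hS (hS.nonpos hα) β).inv_card_smul_sum_mem
      (fun b hb hbC => hGz b hbC (isRoot_of_mem_roots hb))
      (by rw [← Multiset.card_pos, hcard]; omega)
    rwa [hcard] at this
  have hsum : G.coeff s = -G.leadingCoeff * G.roots.sum := by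
    rw [← (IsAlgClosed.splits G).nextCoeff_eq_neg_sum_roots_mul_leadingCoeff,
      nextCoeff_of_natDegree_pos (by omega), hdeg, Nat.add_sub_cancel]
  have hlead : G.coeff (s + 1) = G.leadingCoeff := by rw [← hdeg]; rfl
  refine natDegree_eq_of_le_of_coeff_ne_zero (natDegree_polarDeriv_le a hdeg.le) ?_
  rw [coeff_polarDeriv, hsum, hlead]
  intro h
  push_cast at h
  have hroot : ((s : ℂ) + 1) * a = G.roots.sum := by
    have h' : G.leadingCoeff * (((s : ℂ) + 1) * a - G.roots.sum) = 0 := by linear_combination h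
    linear_combination (mul_eq_zero.mp h').resolve_left (leadingCoeff_ne_zero.mpr hG0)
  refine hmean ?_
  rwa [Complex.real_smul, ← hroot, Nat.cast_add_one, Complex.ofReal_inv, Complex.ofReal_add,
    Complex.ofReal_natCast, Complex.ofReal_one, inv_mul_cancel_left₀ (Nat.cast_add_one_ne_zero s)]

theorem apol_prod_X_sub_C_ne_zero (hS : IsNegHalfLine S) {ms : Multiset ℂ}
    (hms : ∀ x ∈ ms, x ∈ circDomain S α γ β) {G : ℂ[X]} (hG0 : G ≠ 0)
    (hdeg : G.natDegree ≤ Multiset.card ms) (hGz : ∀ z ∈ circDomain S α γ β, G.eval z ≠ 0)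
    (hinf : α ∉ S ∨ G.natDegree = Multiset.card ms) :
    apol (Multiset.card ms) (ms.map (X - C ·)).prod G ≠ 0 := by
  induction ms using Multiset.induction_on generalizing G with
  | empty =>
    rw [Multiset.card_zero, Nat.le_zero] at hdeg
    have hc := leadingCoeff_ne_zero.mpr hG0
    rw [leadingCoeff, hdeg] at hc
    simpa [apol] using hc
  | cons a ms ih =>
    rw [Multiset.card_cons] at hdeg hinf ⊢
    have ha := hms a (Multiset.mem_cons_self a ms)
    have hpolar :
        ∀ z ∈ circDomain S α γ β, (polarDeriv (Multiset.card ms + 1) a G).eval z ≠ 0 :=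
      fun z hz => eval_polarDeriv_ne_zero hS ha hdeg hGz hinf hz
    rw [Multiset.map_cons, Multiset.prod_cons,
      apol_X_sub_C_mul (natDegree_multiset_prod_X_sub_C_eq_card ms).le]
    refine mul_ne_zero (neg_ne_zero.mpr (inv_ne_zero (Nat.cast_add_one_ne_zero _)))
      (ih (fun x hx => hms x (Multiset.mem_cons_of_mem hx)) ?_ (natDegree_polarDeriv_le a hdeg)
        hpolar ?_)
    · intro h
      exact hpolar a ha (by rw [h, eval_zero])
    · by_cases hα : α ∈ S
      · exact Or.inr
          (natDegree_polarDeriv_eq hS hα ha (hinf.resolve_left (not_not_intro hα)) hGz)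
      · exact Or.inl hα

theorem apol_ne_zero_of_roots_mem (hS : IsNegHalfLine S) {m : ℕ} {F G : ℂ[X]} (hF0 : F ≠ 0)
    (hFdeg : F.natDegree = m)
    (hF : ∀ x ∈ F.roots, x ∈ circDomain S α γ β) (hG0 : G ≠ 0) (hGdeg : G.natDegree = m)
    (hGz : ∀ z ∈ circDomain S α γ β, G.eval z ≠ 0) : apol m G F ≠ 0 := by
  have hcard : Multiset.card F.roots = m := by rw [IsAlgClosed.card_roots_eq_natDegree, hFdeg]
  rw [apol_comm, (IsAlgClosed.splits F).eq_prod_roots, apol_C_mul_left, ← hcard]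
  refine mul_ne_zero (pow_ne_zero _ (by norm_num))
    (mul_ne_zero (leadingCoeff_ne_zero.mpr hF0) ?_)
  exact apol_prod_X_sub_C_ne_zero hS hF hG0 (by omega) hGz (Or.inr (by omega))

lemma Sfun_sub_C_mul (q : ℂ[X]) (n : ℕ) (f g : ℂ[X]) (c : ℂ) (y : Fin n → ℂ) :
    Sfun q n (f - C c * g) y = Sfun q n f y - c * Sfun q n g y := by
  rw [Sfun, Sfun, Sfun, sub_comp, mul_comp, C_comp, apol_sub_left, apol_C_mul_left]

theorem Sfun_ne_zero (hS : IsNegHalfLine S) {q : ℂ[X]} (hq : 0 < q.natDegree) {n : ℕ}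
    {h : ℂ[X]} (h0 : h ≠ 0) (hdeg : h.natDegree = n)
    (hz : ∀ w ∈ circDomain S α γ β, h.eval (q.eval w) ≠ 0) {y : Fin n → ℂ}
    (hy : ∀ k, y k ∈ innerImage q (circDomain S α γ β)) : Sfun q n h y ≠ 0 := by
  have hfac : ∀ j, q - C (y j) ≠ 0 := fun j hj => by
    have := natDegree_sub_C (p := q) (a := y j)
    rw [hj, natDegree_zero] at this
    omega
  refine apol_ne_zero_of_roots_mem hS (α := α) (γ := γ) (β := β)
    (prod_ne_zero_iff.mpr fun j _ => hfac j) ?_ ?_ ?_ ?_ ?_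
  · rw [natDegree_prod _ _ fun j _ => hfac j]
    simp [natDegree_sub_C]
  · intro r hr
    obtain ⟨j, -, hj⟩ := prod_eq_zero_iff.mp (by simpa [eval_prod] using isRoot_of_mem_roots hr)
    exact hy j r (sub_eq_zero.mp (by simpa using hj))
  · rw [Ne, comp_eq_zero_iff]
    rintro (h' | ⟨-, hq'⟩)
    · exact h0 h'
    · rw [hq', natDegree_C] at hq
      exact hq.false
  · rw [natDegree_comp, hdeg]
  · intro z hz'
    rw [eval_comp]
    exact hz z hz'

end CircularDomain

lemma IsCircularDomain.exists_eq_circDomain {D : Set ℂ} (hD : IsCircularDomain D) :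
    ∃ S : Set ℝ, IsNegHalfLine S ∧ ∃ α γ β, D = circDomain S α γ β := by
  obtain ⟨α, γ, β, rfl | rfl⟩ := hD
  exacts [⟨_, Or.inl rfl, α, γ, β, rfl⟩, ⟨_, Or.inr rfl, α, γ, β, rfl⟩]

theorem stmt_13_general (D : Set ℂ) (hD : IsCircularDomain D)
    (d : ℕ) (hd : 1 ≤ d) (q : Polynomial ℂ) (hqd : q.natDegree = d)
    (n : ℕ)
    (f g : Polynomial ℂ) (hfm : f.Monic) (hf : f.natDegree = n)
    (hgm : g.Monic) (hg : g.natDegree = n)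
    (hcommon : ∀ u ∈ (fun w => q.eval w) '' D, ¬(f.eval u = 0 ∧ g.eval u = 0))
    (hmaj : ∀ z ∈ (fun w => q.eval w) '' D, ‖g.eval z‖ ≤ ‖f.eval z‖)
    (y : Fin n → ℂ) (hy : ∀ k, y k ∈ innerImage q D) :
    ‖Sfun q n g y‖ ≤ ‖Sfun q n f y‖ := by
  obtain ⟨S, hS, α, γ, β, rfl⟩ := hD.exists_eq_circDomain
  refine norm_le_of_forall_sub_mul_ne_zero fun c hc => ?_
  have hlead : (f - C c * g).coeff n ≠ 0 := by
    rw [coeff_sub, coeff_C_mul, ← hf, hfm.coeff_natDegree, hf, ← hg, hgm.coeff_natDegree,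
      mul_one, sub_ne_zero]
    rintro rfl
    simp at hc
  have hdeg : (f - C c * g).natDegree = n := natDegree_eq_of_le_of_coeff_ne_zero
    ((natDegree_sub_le _ _).trans (max_le hf.le ((natDegree_C_mul_le _ _).trans hg.le))) hlead
  rw [← Sfun_sub_C_mul]
  refine Sfun_ne_zero hS (by omega) (fun h => hlead (by rw [h, coeff_zero])) hdeg
    (fun w hw => ?_) hy
  rw [eval_sub, eval_mul, eval_C]
  exact sub_mul_ne_zero_of_norm_le (hmaj _ ⟨w, hw, rfl⟩) (hcommon _ ⟨w, hw, rfl⟩) hc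

/-- a majorization |f| ≥ |g| on q(D) transfers to
|S_{q,n}(f)| ≥ |S_{q,n}(g)| on (q_∘(D))ⁿ. -/
theorem stmt_13 (D : Set ℂ) (hD : IsCircularDomain D)
    (d : ℕ) (hd : 1 ≤ d) (q : Polynomial ℂ) (hq : q.Monic) (hqd : q.natDegree = d)
    (n : ℕ) (hn : 1 ≤ n)
    (f g : Polynomial ℂ) (hfm : f.Monic) (hf : f.natDegree = n)
    (hgm : g.Monic) (hg : g.natDegree = n)
    (hcommon : ∀ u ∈ (fun w => q.eval w) '' D, ¬(f.eval u = 0 ∧ g.eval u = 0))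
    (hmaj : ∀ z ∈ (fun w => q.eval w) '' D, ‖g.eval z‖ ≤ ‖f.eval z‖)
    (y : Fin n → ℂ) (hy : ∀ k, y k ∈ innerImage q D) :
    ‖Sfun q n g y‖ ≤ ‖Sfun q n f y‖ :=
  stmt_13_general D hD d hd q hqd n f g hfm hf hgm hg hcommon hmaj y hy
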